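/- arXiv:1404.1668 — 3 statements merged into one kernel-verified Lean document; each statement's English description precedes it below -/
import Mathlib

section
/- Let V : [0,∞) → ℝ≥0 be continuously differentiable, and let Ξ ⊆ [0,∞) be a measurable set. Suppose ω₁, ω₂ > 0 and for almost every t: V'(t) ≤ −ω₁ V(t) if t ∉ Ξ, and V'(t) ≤ ω₂ V(t) if t ∈ Ξ. Then for all t ≥ 0, V(t) ≤ exp(−ω₁ t + (ω₁+ω₂)·|Ξ ∩ [0,t]|) · V(0), where |·| denotes Lebesgue measure. -/
/-! With the rate `k = -ω₁` off `Ξ` and `k = ω₂` on `Ξ`, the hypothesis says `V' ≤ k V` almost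
everywhere. The weighted function `exp (-∫₀ˢ k) · V s` then has a.e. nonpositive derivative; it is
only absolutely continuous (the weight is merely Lipschitz), but that suffices for it to be
nonincreasing. Finally `∫₀ᵗ k = -ω₁ t + (ω₁ + ω₂) |Ξ ∩ [0, t]|`. -/

open MeasureTheory Set Filter

theorem LipschitzOnWith.comp_absolutelyContinuousOnInterval {X Y : Type*} [PseudoMetricSpace X]
    [PseudoMetricSpace Y] {g : X → Y} {f : ℝ → X} {a b : ℝ} {K : NNReal} {s : Set X}
    (hg : LipschitzOnWith K g s) (hfs : MapsTo f (uIcc a b) s)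
    (hf : AbsolutelyContinuousOnInterval f a b) :
    AbsolutelyContinuousOnInterval (g ∘ f) a b := by
  have hKf := Tendsto.const_mul (K : ℝ) hf
  rw [mul_zero] at hKf
  refine squeeze_zero' (Eventually.of_forall fun _ ↦ Finset.sum_nonneg fun _ _ ↦ dist_nonneg)
    ?_ hKf
  filter_upwards [mem_inf_of_right (mem_principal_self _)] with E hE
  rw [Finset.mul_sum]
  exact Finset.sum_le_sum fun i hi ↦
    hg.dist_le_mul _ (hfs (hE.1 i hi).1) _ (hfs (hE.1 i hi).2)

theorem LocallyLipschitz.comp_absolutelyContinuousOnInterval {F Y : Type*}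
    [SeminormedAddCommGroup F] [PseudoMetricSpace Y] {g : F → Y} {f : ℝ → F} {a b : ℝ}
    (hg : LocallyLipschitz g) (hf : AbsolutelyContinuousOnInterval f a b) :
    AbsolutelyContinuousOnInterval (g ∘ f) a b := by
  obtain ⟨_, hK⟩ := hg.locallyLipschitzOn.exists_lipschitzOnWith_of_compact
    (isCompact_uIcc.image_of_continuousOn hf.continuousOn)
  exact hK.comp_absolutelyContinuousOnInterval (mapsTo_image f _) hf

theorem AbsolutelyContinuousOnInterval.le_of_ae_deriv_nonpos {f : ℝ → ℝ} {a b : ℝ} (hab : a ≤ b)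
    (hf : AbsolutelyContinuousOnInterval f a b) (hf' : ∀ᵐ x, x ∈ Icc a b → deriv f x ≤ 0) :
    f b ≤ f a := by
  have h : ∫ x in a..b, deriv f x ≤ ∫ _ in a..b, (0 : ℝ) :=
    intervalIntegral.integral_mono_ae_restrict hab hf.intervalIntegrable_deriv
      intervalIntegrable_const ((ae_restrict_iff' measurableSet_Icc).2 hf')
  rw [hf.integral_deriv_eq_sub, intervalIntegral.integral_zero] at h
  linarith

theorem AbsolutelyContinuousOnInterval.le_exp_integral_mul_of_ae_deriv_le {u k : ℝ → ℝ}
    {a b : ℝ} (hab : a ≤ b) (hu : AbsolutelyContinuousOnInterval u a b)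
    (hk : IntervalIntegrable k volume a b)
    (hdu : ∀ᵐ s, s ∈ Icc a b → deriv u s ≤ k s * u s) :
    u b ≤ Real.exp (∫ s in a..b, k s) * u a := by
  set K : ℝ → ℝ := fun s ↦ ∫ r in a..s, k r
  set w : ℝ → ℝ := fun s ↦ Real.exp (-K s) * u s
  have hw : AbsolutelyContinuousOnInterval w a b :=
    (Real.contDiff_exp.locallyLipschitz.comp_absolutelyContinuousOnInterval
      (hk.absolutelyContinuousOnInterval_intervalIntegral left_mem_uIcc).neg).mul hu
  have hw' : ∀ᵐ s, s ∈ Icc a b → deriv w s ≤ 0 := by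
    filter_upwards [hu.ae_differentiableAt, hk.ae_hasDerivAt_integral, hdu]
      with s hus hKs hdus hs
    have hs' : s ∈ uIcc a b := Icc_subset_uIcc hs
    have hws : HasDerivAt w (Real.exp (-K s) * -k s * u s + Real.exp (-K s) * deriv u s) s :=
      (hKs hs' a left_mem_uIcc).neg.exp.mul (hus hs').hasDerivAt
    rw [hws.deriv]
    nlinarith [Real.exp_pos (-K s), hdus hs]
  have hwab : w b ≤ w a := hw.le_of_ae_deriv_nonpos hab hw'
  calc u b = Real.exp (K b) * w b := by simp [w, ← mul_assoc, ← Real.exp_add]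
    _ ≤ Real.exp (K b) * w a := by gcongr
    _ = Real.exp (K b) * u a := by simp [w, K]

theorem intervalIntegrable_indicator_const {Ξ : Set ℝ} (hΞ : MeasurableSet Ξ) (d : ℝ) {a b : ℝ} :
    IntervalIntegrable (Ξ.indicator fun _ ↦ d) volume a b :=
  ⟨intervalIntegrable_const.1.indicator hΞ, intervalIntegrable_const.2.indicator hΞ⟩

theorem intervalIntegral_const_add_indicator {Ξ : Set ℝ} (hΞ : MeasurableSet Ξ) (c d : ℝ)
    {a b : ℝ} (hab : a ≤ b) :
    ∫ s in a..b, (c + Ξ.indicator (fun _ ↦ d) s) =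
      c * (b - a) + d * volume.real (Ξ ∩ Icc a b) := by
  rw [intervalIntegral.integral_add intervalIntegrable_const, intervalIntegral.integral_const,
    intervalIntegral.integral_of_le hab, integral_indicator_const _ hΞ,
    measureReal_restrict_apply hΞ, measureReal_congr ((ae_eq_refl Ξ).inter Ioc_ae_eq_Icc)]
  · simp [mul_comm]
  · exact intervalIntegrable_indicator_const hΞ d

theorem stmt2_general (V : ℝ → ℝ) (hV1 : ContDiff ℝ 1 V)
    (Ξ : Set ℝ) (hΞ : MeasurableSet Ξ)
    (ω₁ ω₂ : ℝ)
    (hae : ∀ᵐ t ∂volume, 0 ≤ t →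
      ((t ∉ Ξ → deriv V t ≤ -ω₁ * V t) ∧ (t ∈ Ξ → deriv V t ≤ ω₂ * V t))) :
    ∀ t : ℝ, 0 ≤ t →
      V t ≤ Real.exp (-ω₁ * t + (ω₁ + ω₂) * (volume (Ξ ∩ Set.Icc 0 t)).toReal) * V 0 := by
  intro t ht
  set k : ℝ → ℝ := fun s ↦ -ω₁ + Ξ.indicator (fun _ ↦ ω₁ + ω₂) s
  have hk : IntervalIntegrable k volume 0 t :=
    intervalIntegrable_const.add (intervalIntegrable_indicator_const hΞ _)
  have hdV : ∀ᵐ s, s ∈ Icc 0 t → deriv V s ≤ k s * V s := by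
    filter_upwards [hae] with s hs hst
    by_cases hsΞ : s ∈ Ξ
    · simpa [k, hsΞ] using (hs hst.1).2 hsΞ
    · simpa [k, hsΞ] using (hs hst.1).1 hsΞ
  have hV := hV1.contDiffOn.absolutelyContinuousOnInterval.le_exp_integral_mul_of_ae_deriv_le
    ht hk hdV
  rwa [intervalIntegral_const_add_indicator hΞ _ _ ht, sub_zero] at hV

theorem stmt2 (V : ℝ → ℝ) (hV1 : ContDiff ℝ 1 V) (hVnn : ∀ t, 0 ≤ V t)
    (Ξ : Set ℝ) (hΞ : MeasurableSet Ξ)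
    (ω₁ ω₂ : ℝ) (hω₁ : 0 < ω₁) (hω₂ : 0 < ω₂)
    (hae : ∀ᵐ t ∂volume, 0 ≤ t →
      ((t ∉ Ξ → deriv V t ≤ -ω₁ * V t) ∧ (t ∈ Ξ → deriv V t ≤ ω₂ * V t))) :
    ∀ t : ℝ, 0 ≤ t →
      V t ≤ Real.exp (-ω₁ * t + (ω₁ + ω₂) * (volume (Ξ ∩ Set.Icc 0 t)).toReal) * V 0 :=
  stmt2_general V hV1 Ξ hΞ ω₁ ω₂ hae
end

section
/- Under the event-triggering rule that guarantees ‖e(t)‖ ≤ σ‖x(t)‖ is maintained between samples, with error dynamics satisfying ‖e(t)‖ ≤ (1/2)(e^{2L(t−t_k)} − 1)‖x(t_k)‖ and e(t_k) = 0, the inter-sample time satisfies t_{k+1} − t_k ≥ (1/(2L))·ln((3σ+1)/(σ+1)) > 0 for every k. Formally: if t_{k+1} is the infimum of times t > t_k at which ‖e(t)‖ > σ‖x(t)‖, then t_{k+1} − t_k ≥ ε with ε = (1/(2L))ln((3σ+1)/(σ+1)). -/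
/-!
At a triggering time `t` the chain `σ‖x tₖ‖ ≤ σ‖e t‖ + σ‖x t‖ < (σ + 1)‖e t‖`, combined with
the growth bound on `‖e t‖`, gives `2σ < (σ + 1)(exp (2L(t - tₖ)) - 1)` (the strictness also
rules out `x tₖ = 0`). Taking logarithms, every triggering time lies at least
`log ((3σ + 1)/(σ + 1)) / (2L)` after `tₖ`, hence so does their infimum.
-/

open Real

lemma three_mul_add_one_div_lt_of_trigger {σ X xt et E : ℝ} (hσ : 0 ≤ σ) (hX : 0 ≤ X)
    (htrig : σ * xt < et) (htri : X ≤ et + xt) (hbnd : et ≤ 1 / 2 * (E - 1) * X) :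
    (3 * σ + 1) / (σ + 1) < E := by
  have hchain : 2 * σ * X < (σ + 1) * (E - 1) * X := by nlinarith
  have hgap : 2 * σ < (σ + 1) * (E - 1) := lt_of_mul_lt_mul_right hchain hX
  rw [div_lt_iff₀ (by linarith)]
  linarith

lemma one_div_mul_log_le_of_lt_exp {L r s : ℝ} (hL : 0 < L) (hr : 0 < r)
    (hrs : r < exp (2 * L * s)) : 1 / (2 * L) * log r ≤ s := by
  have hlog : log r < 2 * L * s := (log_lt_iff_lt_exp hr).mpr hrs
  rw [one_div_mul_eq_div, div_le_iff₀ (by positivity)]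
  linarith

theorem stmt8_general {n : ℕ} (tk L σ : ℝ) (hL : 0 < L) (hσ : 0 < σ)
    (x e : ℝ → EuclideanSpace ℝ (Fin n))
    (hbnd : ∀ t, tk ≤ t → ‖e t‖ ≤ (1/2) * (Real.exp (2 * L * (t - tk)) - 1) * ‖x tk‖)
    (htri : ∀ t, tk ≤ t → ‖x tk‖ ≤ ‖e t‖ + ‖x t‖)
    (S : Set ℝ) (hS : S = {t : ℝ | tk < t ∧ σ * ‖x t‖ < ‖e t‖})
    (hne : S.Nonempty) :
    (1 / (2 * L)) * Real.log ((3 * σ + 1) / (σ + 1)) ≤ sInf S - tk := by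
  refine le_sub_iff_add_le'.mpr (le_csInf hne fun t ht => ?_)
  rw [hS] at ht
  obtain ⟨hlt, htrig⟩ := ht
  have hexp : (3 * σ + 1) / (σ + 1) < exp (2 * L * (t - tk)) :=
    three_mul_add_one_div_lt_of_trigger hσ.le (norm_nonneg _) htrig (htri t hlt.le)
      (hbnd t hlt.le)
  linarith [one_div_mul_log_le_of_lt_exp hL (by positivity) hexp]

theorem stmt8 {n : ℕ} (tk L σ : ℝ) (hL : 0 < L) (hσ : 0 < σ)
    (x e : ℝ → EuclideanSpace ℝ (Fin n))
    (he0 : e tk = 0)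
    (hbnd : ∀ t, tk ≤ t → ‖e t‖ ≤ (1/2) * (Real.exp (2 * L * (t - tk)) - 1) * ‖x tk‖)
    (htri : ∀ t, tk ≤ t → ‖x tk‖ ≤ ‖e t‖ + ‖x t‖)
    (S : Set ℝ) (hS : S = {t : ℝ | tk < t ∧ σ * ‖x t‖ < ‖e t‖})
    (hne : S.Nonempty) :
    (1 / (2 * L)) * Real.log ((3 * σ + 1) / (σ + 1)) ≤ sInf S - tk :=
  stmt8_general tk L σ hL hσ x e hbnd htri S hS hne
end

section
/- Let x : [t_k, T] → ℝⁿ be a solution of ẋ = f(x, k(x̂)) with constant x̂ = x(t_k), and suppose ‖f(x, k(x+e))‖ ≤ L(‖x‖+‖e‖) on the relevant compact set. If the trigger condition ‖e(t)‖ ≤ σ‖x(t)‖ (with e(t) = x(t_k) − x(t)) holds on [t_k, T], then ‖x(t)‖ ≥ ‖x(t_k)‖/(1+σ) and ‖x(t)‖ ≤ ‖x(t_k)‖·e^{L(1+σ)(t−t_k)} for all t ∈ [t_k, T]. -/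
theorem stmt18 {n : ℕ} (tk T L σ : ℝ) (htk : tk ≤ T) (hL : 0 < L) (hσ : 0 < σ)
    (x x' : ℝ → EuclideanSpace ℝ (Fin n))
    (hderiv : ∀ t ∈ Set.Icc tk T, HasDerivAt x (x' t) t)
    (hlip : ∀ t ∈ Set.Icc tk T, ‖x' t‖ ≤ L * (‖x t‖ + ‖x tk - x t‖))
    (htrig : ∀ t ∈ Set.Icc tk T, ‖x tk - x t‖ ≤ σ * ‖x t‖) :
    ∀ t ∈ Set.Icc tk T,
      ‖x tk‖ / (1 + σ) ≤ ‖x t‖ ∧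
      ‖x t‖ ≤ ‖x tk‖ * Real.exp (L * (1 + σ) * (t - tk)) := by
  have h1σ : (0:ℝ) < 1 + σ := by linarith
  intro t ht
  constructor
  · rw [div_le_iff₀ h1σ]
    have := htrig t ht
    calc ‖x tk‖ ≤ ‖x t‖ + ‖x tk - x t‖ := by
          have := norm_sub_norm_le (x tk) (x t); linarith [norm_nonneg (x tk - x t)]
      _ ≤ ‖x t‖ + σ * ‖x t‖ := by linarith
      _ = ‖x t‖ * (1 + σ) := by ring
  · have hcont : ContinuousOn x (Set.Icc tk T) := fun s hs =>
      ((hderiv s hs).continuousAt).continuousWithinAt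
    have key := norm_le_gronwallBound_of_norm_deriv_right_le (f := x) (f' := x')
      (δ := ‖x tk‖) (K := L * (1 + σ)) (ε := 0) (a := tk) (b := T) hcont
      (fun s hs => ((hderiv s (Set.Ico_subset_Icc_self hs)).hasDerivWithinAt))
      le_rfl
      (fun s hs => by
        have hs' := Set.Ico_subset_Icc_self hs
        have h1 := hlip s hs'
        have h2 := htrig s hs'
        calc ‖x' s‖ ≤ L * (‖x s‖ + ‖x tk - x s‖) := h1
          _ ≤ L * (‖x s‖ + σ * ‖x s‖) := by nlinarith
          _ = L * (1 + σ) * ‖x s‖ + 0 := by ring)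
      t ht
    rwa [gronwallBound_ε0] at key
end
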